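/- Let (U,V) be a pair of square-integrable real random variables such that U and V each have a probability density bounded by M > 0, and such that the pair is quasi-associated in the sense that for all Lipschitz functions f, g : ℝ → ℝ, |Cov(f(U), g(V))| ≤ Lip(f)·Lip(g)·|Cov(U,V)|. Then for all u, v ∈ ℝ, |Cov(1{U ≥ u}, 1{V ≥ v})| ≤ 3 M^{2/3} |Cov(U,V)|^{1/3}. -/

import Mathlib

open MeasureTheory ProbabilityTheory Filter Set
open scoped ENNReal NNReal Topology Pointwise RealInnerProductSpace

noncomputable section

abbrev Euc (d : ℕ) : Type := EuclideanSpace ℝ (Fin d)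

def unitCube (d : ℕ) : Set (Euc d) := {t | ∀ i, t i ∈ Set.Icc (0 : ℝ) 1}

def basisVec (d : ℕ) (j : Fin d) : Euc d := EuclideanSpace.single j (1 : ℝ)

def betaD (d : ℕ) : ℝ :=
  2 * Real.sqrt Real.pi * Real.Gamma (((d : ℝ) + 1) / 2) / Real.Gamma ((d : ℝ) / 2)

variable {Ω : Type*} [MeasurableSpace Ω] {d : ℕ}

def IsStationaryField (P : Measure Ω) (X : Ω → Euc d → ℝ) : Prop :=
  ∀ v : Euc d,
    Measure.map (fun ω => (fun t => X ω (t + v))) P = Measure.map (fun ω => X ω) P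

def IsIsotropicField (P : Measure Ω) (X : Ω → Euc d → ℝ) : Prop :=
  ∀ R : Euc d ≃ₗᵢ[ℝ] Euc d,
    Measure.map (fun ω => (fun t => X ω (R t))) P = Measure.map (fun ω => X ω) P

structure AssumptionA0 (P : Measure Ω) (X : Ω → Euc d → ℝ) : Prop where
  stationary : IsStationaryField P X
  meas : ∀ t : Euc d, Measurable fun ω => X ω t
  posVariance : 0 < variance (fun ω => X ω 0) P
  memL2 : MemLp (fun ω => X ω 0) 2 P
  smooth : ∀ᵐ ω ∂P, ContDiff ℝ 2 (X ω)
  jointDensityBounded : ∃ C : ℝ≥0∞, C ≠ ⊤ ∧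
    Measure.map (fun ω => (X ω 0, gradient (X ω) 0)) P ≤ C • (volume : Measure (ℝ × Euc d))

def surfaceDensity (P : Measure Ω) (X : Ω → Euc d → ℝ) (u : ℝ) : ℝ :=
  (∫⁻ ω, μH[(d : ℝ) - 1] {t ∈ unitCube d | X ω t = u} ∂P).toReal

def AssumptionA1 (P : Measure Ω) [IsFiniteMeasure P] (X : Ω → Euc d → ℝ) (w : Euc d) : Prop :=
  (∃ M : ℝ≥0∞, M ≠ ⊤ ∧
    condDistrib (fun ω => X ω 0) (fun ω => deriv (fun t : ℝ => X ω (t • w)) 0) P 0 ≤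
      M • (volume : Measure ℝ)) ∧
  MemLp (fun ω => ⨆ t ∈ Set.Icc (0 : ℝ) 1, |deriv (deriv fun s : ℝ => X ω (s • w)) t|) 2 P

def AssumptionA2 (P : Measure Ω) (X : Ω → Euc d → ℝ) (u : ℝ) (w : Euc d) (ε : ℝ) : Prop :=
  ∫⁻ ω, (Measure.count {lam : ℝ | X ω (lam • w) = u ∧ lam • w ∈ unitCube d}) ^ (1 / ε) ∂P < ⊤

def Wfun (X : Euc d → ℝ) (j : Fin d) : ℝ :=
  ⨆ t ∈ unitCube d, ⨆ k : Fin d,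
    max |fderiv ℝ X t (basisVec d k)|
        |fderiv ℝ (fun s => fderiv ℝ X s (basisVec d j)) t (basisVec d k)|

def AssumptionA3 (P : Measure Ω) [IsFiniteMeasure P] (X : Ω → Euc d → ℝ) (u : ℝ) (j : Fin d) :
    Prop :=
  (∃ U ∈ nhds ((u, 0) : ℝ × ℝ),
    (∃ M : ℝ≥0∞, M ≠ ⊤ ∧ ∀ s : Set (ℝ × ℝ), s ⊆ U →
      Measure.map (fun ω => (X ω 0, fderiv ℝ (X ω) 0 (basisVec d j))) P s ≤ M * volume s) ∧
    ∀ x ∈ U, (∫⁻ w, ENNReal.ofReal (w ^ 2)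
        ∂(condDistrib (fun ω => Wfun (X ω) j)
            (fun ω => (X ω 0, fderiv ℝ (X ω) 0 (basisVec d j))) P x)) < ⊤) ∧
  (∃ a b : ℝ, a < u ∧ u < b ∧
    (∃ M : ℝ≥0∞, M ≠ ⊤ ∧ ∀ s : Set ℝ, s ⊆ Set.Ioo a b →
      Measure.map (fun ω => X ω 0) P s ≤ M * volume s) ∧
    ∀ x ∈ Set.Ioo a b, (∫⁻ w, ENNReal.ofReal w
        ∂(condDistrib (fun ω => ⨆ t ∈ unitCube d, ‖gradient (X ω) t‖)
            (fun ω => X ω 0) P x)) < ⊤)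

def fieldSigma (X : Ω → Euc d → ℝ) (U : Set (Euc d)) : MeasurableSpace Ω :=
  ⨆ t ∈ U, MeasurableSpace.comap (fun ω => X ω t) inferInstance

def mixingCoef (P : Measure Ω) (X : Ω → Euc d → ℝ) (s : ℝ) : ℝ :=
  sSup {x : ℝ | ∃ U V : Set (Euc d),
    (ENNReal.ofReal s < ⨅ (p : Euc d) (_ : p ∈ U) (q : Euc d) (_ : q ∈ V), edist p q) ∧
    ∃ A B : Set Ω, MeasurableSet[fieldSigma X U] A ∧ MeasurableSet[fieldSigma X V] B ∧
      x = |(P (A ∩ B)).toReal - (P A).toReal * (P B).toReal|}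

def covP (P : Measure Ω) (F G : Ω → ℝ) : ℝ :=
  (∫ ω, F ω * G ω ∂P) - (∫ ω, F ω ∂P) * (∫ ω, G ω ∂P)

def Ctilde (T : Set (Euc d)) (f : Euc d → ℝ) (u : ℝ) : ℝ :=
  (∫ s in {t ∈ T | f t = u}, (∑ i : Fin d, |gradient f s i|) / ‖gradient f s‖
      ∂(μH[(d : ℝ) - 1] : Measure (Euc d))) / (volume T).toReal

def CvolT (T : Set (Euc d)) (f : Euc d → ℝ) (u : ℝ) : ℝ :=
  (volume {t ∈ T | u ≤ f t}).toReal / (volume T).toReal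

def CsurfT (T : Set (Euc d)) (f : Euc d → ℝ) (u : ℝ) : ℝ :=
  (μH[(d : ℝ) - 1] {t ∈ T | f t = u}).toReal / (volume T).toReal

def cubeT (d : ℕ) (a : ℝ) : Set (Euc d) := {t | ∀ k, t k ∈ Set.Icc (-a) a}

def IsHypercube (T : Set (Euc d)) : Prop :=
  ∃ (a : Euc d) (L : ℝ), 0 < L ∧ T = {t | ∀ i, t i ∈ Set.Icc (a i) (a i + L)}

def gridPt (d : ℕ) (δ : ℝ) (i : Fin d → ℤ) : Euc d :=
  ∑ k : Fin d, (δ * (i k : ℝ)) • basisVec d k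

def gridIdx (d : ℕ) (N : ℕ) : Finset (Fin d → ℤ) :=
  Finset.Icc (fun _ => -(N : ℤ)) (fun _ => (N : ℤ) - 1)

def ind (u x : ℝ) : ℝ := if u ≤ x then 1 else 0

def hypVolEst (X : Euc d → ℝ) (u δ : ℝ) (N : ℕ) : ℝ :=
  (δ ^ d / (2 * (N : ℝ) * δ) ^ d) * ∑ i ∈ gridIdx d N, ind u (X (gridPt d δ i))

def hypSurfEst (X : Euc d → ℝ) (u δ : ℝ) (N : ℕ) : ℝ :=
  (δ ^ (d - 1) / (2 * (N : ℝ) * δ) ^ d) *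
    ∑ j : Fin d, ∑ i ∈ gridIdx d N,
      if i j < (N : ℤ) - 1 then
        |ind u (X (gridPt d δ i)) -
          ind u (X (gridPt d δ (fun k => i k + if k = j then 1 else 0)))|
      else 0

structure PointRefHoneycomb (d : ℕ) where
  cells : Set (Set (Euc d))
  ref : Set (Euc d) → Euc d
  cellsConvex : ∀ P ∈ cells, Convex ℝ P
  cellsClosed : ∀ P ∈ cells, IsClosed P
  cellsPolytope : ∀ P ∈ cells, ∃ H : Finset (Euc d × ℝ), P = {x | ∀ h ∈ H, ⟪h.1, x⟫ ≤ h.2}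
  covers : ⋃₀ cells = Set.univ
  disjointInteriors : ∀ P ∈ cells, ∀ Q ∈ cells, P ≠ Q → interior P ∩ interior Q = ∅
  refMem : ∀ P ∈ cells, ref P ∈ P
  faceNormal : ∀ P ∈ cells, ∀ Q ∈ cells, P ≠ Q → 0 < μH[(d : ℝ) - 1] (P ∩ Q) →
    ∀ x ∈ P ∩ Q, ∀ y ∈ P ∩ Q, ⟪x - y, ref Q - ref P⟫ = 0

open Classical in
def scaledSurfEst (H : PointRefHoneycomb d) (δ : ℝ) (T : Set (Euc d))
    (X : Euc d → ℝ) (u : ℝ) : ℝ :=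
  (∑' P : H.cells, ∑' Q : H.cells,
    if P.1 ≠ Q.1 ∧ δ • P.1 ⊆ T ∧ δ • Q.1 ⊆ T ∧
        X (δ • H.ref P.1) ≤ u ∧ u < X (δ • H.ref Q.1)
    then μH[(d : ℝ) - 1] ((δ • P.1) ∩ (δ • Q.1)) else 0).toReal / (volume T).toReal

open Classical in
def honeycombVolEst (H : PointRefHoneycomb d) (T : Set (Euc d)) (X : Euc d → ℝ) (u : ℝ) : ℝ :=
  (∑' P : {P : Set (Euc d) // P ∈ H.cells ∧ P ⊆ T},
    if u ≤ X (H.ref P.1) then volume P.1 else 0).toReal / (volume T).toReal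

def voronoiCell (S : Set (Euc d)) (p : Euc d) : Set (Euc d) :=
  {x | ∀ q ∈ S, dist x p ≤ dist x q}

open Classical in
def voronoiSurfEst (S : Set (Euc d)) (δ : ℝ) (T : Set (Euc d)) (X : Euc d → ℝ) (u : ℝ) : ℝ :=
  (∑' p : S, ∑' q : S,
    if p.1 ≠ q.1 ∧ δ • voronoiCell S p.1 ⊆ T ∧ δ • voronoiCell S q.1 ⊆ T ∧
        X (δ • p.1) ≤ u ∧ u < X (δ • q.1)
    then μH[(d : ℝ) - 1] ((δ • voronoiCell S p.1) ∩ (δ • voronoiCell S q.1)) else 0).toReal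
    / (volume T).toReal

def QuasiAssociated (P : Measure Ω) (X : Ω → Euc d → ℝ) : Prop :=
  ∀ I J : Finset (Euc d), Disjoint I J →
    ∀ (f : (↥I → ℝ) → ℝ) (g : (↥J → ℝ) → ℝ) (Lf Lg : ℝ≥0),
      LipschitzWith Lf f → LipschitzWith Lg g →
      |covP P (fun ω => f fun s => X ω ↑s) (fun ω => g fun t => X ω ↑t)| ≤
        (Lf : ℝ) * (Lg : ℝ) * ∑ s ∈ I, ∑ t ∈ J, |covP P (fun ω => X ω s) (fun ω => X ω t)|


/-!
Smooth the two indicators by piecewise linear ramps of width `ε`. A ramp is `ε⁻¹`-Lipschitz, so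
quasi-association bounds the covariance of the ramps by `ε⁻² |Cov(U,V)|`, while each ramp differs
from its indicator only on an interval of length `ε`, which has probability at most `M ε`.
Hence the covariance of the indicators is at most `ε⁻² |Cov(U,V)| + 2 M ε`, and the choice
`ε = (|Cov(U,V)| / M)^{1/3}` gives the bound.
-/

def QuasiAssociatedPair (P : Measure Ω) (U V : Ω → ℝ) : Prop :=
  ∀ (f g : ℝ → ℝ) (Lf Lg : ℝ≥0), LipschitzWith Lf f → LipschitzWith Lg g →
    |covP P (f ∘ U) (g ∘ V)| ≤ (Lf : ℝ) * (Lg : ℝ) * |covP P U V|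

def ramp (u ε x : ℝ) : ℝ := max 0 (min 1 ((x - u) / ε + 1))

lemma measurable_ind (u : ℝ) : Measurable (ind u) :=
  Measurable.ite measurableSet_Ici measurable_const measurable_const

lemma ind_mem_Icc (u x : ℝ) : ind u x ∈ Icc (0 : ℝ) 1 := by
  unfold ind; split_ifs <;> norm_num

lemma ramp_mem_Icc (u ε x : ℝ) : ramp u ε x ∈ Icc (0 : ℝ) 1 :=
  ⟨le_max_left _ _, max_le zero_le_one (min_le_left _ _)⟩

lemma lipschitzWith_ramp (u : ℝ) {ε : ℝ} (hε : 0 < ε) :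
    LipschitzWith (ε⁻¹).toNNReal (ramp u ε) := by
  have affine : LipschitzWith (ε⁻¹).toNNReal fun x : ℝ => (x - u) / ε + 1 := by
    refine LipschitzWith.of_dist_le_mul fun x y => ?_
    rw [Real.coe_toNNReal _ (inv_nonneg.2 hε.le), Real.dist_eq, Real.dist_eq,
      add_sub_add_right_eq_sub, ← sub_div, sub_sub_sub_cancel_right, abs_div, abs_of_pos hε,
      div_eq_inv_mul]
  exact (affine.const_min 1).const_max 0

lemma abs_ramp_sub_ind_le {ε : ℝ} (hε : 0 < ε) (u x : ℝ) :
    |ramp u ε x - ind u x| ≤ (Ico (u - ε) u).indicator 1 x := by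
  by_cases hx : x ∈ Ico (u - ε) u
  · rw [indicator_of_mem hx, Pi.one_apply, abs_sub_le_iff]
    obtain ⟨h₀, h₁⟩ := ramp_mem_Icc u ε x
    obtain ⟨h₀', h₁'⟩ := ind_mem_Icc u x
    constructor <;> linarith
  · rw [indicator_of_notMem hx]
    rcases lt_or_ge x u with hxu | hux
    · have hx' : x < u - ε := by by_contra h; exact hx ⟨not_lt.1 h, hxu⟩
      have : (x - u) / ε + 1 ≤ 0 := by
        rw [div_add_one hε.ne']; exact div_nonpos_of_nonpos_of_nonneg (by linarith) hε.le
      simp [ramp, ind, not_le.2 hxu, this]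
    · have : 1 ≤ (x - u) / ε + 1 := le_add_of_nonneg_left (div_nonneg (by linarith) hε.le)
      simp [ramp, ind, hux, this]

lemma measureReal_le_mul_volumeReal {μ : Measure ℝ} {M : ℝ} (hM : 0 ≤ M)
    (hμ : μ ≤ ENNReal.ofReal M • volume) {s : Set ℝ} (hs : volume s ≠ ∞) :
    μ.real s ≤ M * volume.real s := by
  have := ENNReal.toReal_mono (ENNReal.mul_ne_top ENNReal.ofReal_ne_top hs) (hμ s)
  rwa [ENNReal.toReal_mul, ENNReal.toReal_ofReal hM] at this

section

variable {P : Measure Ω} [IsProbabilityMeasure P]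

lemma covP_eq_covariance {F G : Ω → ℝ} (hF : MemLp F 2 P) (hG : MemLp G 2 P) :
    covP P F G = cov[F, G; P] :=
  (covariance_eq_sub hF hG).symm

lemma abs_covariance_le_integral_abs {X Y : Ω → ℝ} (hX : MemLp X 2 P)
    (hY : AEStronglyMeasurable Y P) (hY01 : ∀ᵐ ω ∂P, Y ω ∈ Icc (0 : ℝ) 1) :
    |cov[X, Y; P]| ≤ ∫ ω, |X ω| ∂P := by
  have hY2 : MemLp Y 2 P := memLp_of_bounded hY01 hY 2
  set m := ∫ ω, Y ω ∂P
  have hm : m ∈ Icc (0 : ℝ) 1 :=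
    ⟨integral_nonneg_of_ae (hY01.mono fun _ h => h.1),
      (integral_mono_ae (hY2.integrable one_le_two) (integrable_const 1)
        (hY01.mono fun _ h => h.2)).trans_eq (by simp)⟩
  have centred : cov[X, Y; P] = ∫ ω, X ω * (Y ω - m) ∂P := by
    rw [← covP_eq_covariance hX hY2, covP, ← integral_mul_const, ← integral_sub]
    · congr with ω; ring
    · exact hX.integrable_mul hY2
    · exact (hX.integrable one_le_two).mul_const m
  rw [centred, ← Real.norm_eq_abs]
  refine norm_integral_le_of_norm_le (hX.integrable one_le_two).abs (hY01.mono fun ω h => ?_)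
  rw [norm_mul, Real.norm_eq_abs]
  exact mul_le_of_le_one_right (abs_nonneg _) (abs_sub_le_iff.2 ⟨by linarith [hm.1, h.2],
    by linarith [hm.2, h.1]⟩)

lemma abs_covP_sub_covP_le {X X' Y Y' : Ω → ℝ}
    (hX : AEStronglyMeasurable X P) (hX01 : ∀ᵐ ω ∂P, X ω ∈ Icc (0 : ℝ) 1)
    (hX' : AEStronglyMeasurable X' P) (hX'01 : ∀ᵐ ω ∂P, X' ω ∈ Icc (0 : ℝ) 1)
    (hY : AEStronglyMeasurable Y P) (hY01 : ∀ᵐ ω ∂P, Y ω ∈ Icc (0 : ℝ) 1)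
    (hY' : AEStronglyMeasurable Y' P) (hY'01 : ∀ᵐ ω ∂P, Y' ω ∈ Icc (0 : ℝ) 1) :
    |covP P X Y - covP P X' Y'| ≤ ∫ ω, |X ω - X' ω| ∂P + ∫ ω, |Y ω - Y' ω| ∂P := by
  have hX2 := memLp_of_bounded hX01 hX 2
  have hX'2 := memLp_of_bounded hX'01 hX' 2
  have hY2 := memLp_of_bounded hY01 hY 2
  have hY'2 := memLp_of_bounded hY'01 hY' 2
  have split : cov[X, Y; P] - cov[X', Y'; P]
      = cov[fun ω => X ω - X' ω, Y; P] + cov[fun ω => Y ω - Y' ω, X'; P] := by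
    rw [covariance_fun_sub_left hX2 hX'2 hY2, covariance_fun_sub_left hY2 hY'2 hX'2,
      covariance_comm Y X', covariance_comm Y' X']
    ring
  rw [covP_eq_covariance hX2 hY2, covP_eq_covariance hX'2 hY'2, split]
  exact (abs_add_le _ _).trans (add_le_add
    (abs_covariance_le_integral_abs (hX2.sub hX'2) hY hY01)
    (abs_covariance_le_integral_abs (hY2.sub hY'2) hX' hX'01))

lemma integral_abs_ramp_sub_ind_le {W : Ω → ℝ} (hW : AEMeasurable W P) {M : ℝ} (hM : 0 ≤ M)
    (hdW : Measure.map W P ≤ ENNReal.ofReal M • volume) (u : ℝ) {ε : ℝ} (hε : 0 < ε) :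
    ∫ ω, |ramp u ε (W ω) - ind u (W ω)| ∂P ≤ M * ε := by
  have hs : MeasurableSet (Ico (u - ε) u) := measurableSet_Ico
  calc ∫ ω, |ramp u ε (W ω) - ind u (W ω)| ∂P
      ≤ ∫ ω, (Ico (u - ε) u).indicator 1 (W ω) ∂P := by
        refine integral_mono_of_nonneg (Eventually.of_forall fun _ => abs_nonneg _) ?_
          (Eventually.of_forall fun ω => abs_ramp_sub_ind_le hε u (W ω))
        exact ((integrable_const 1).indicator hs).comp_aemeasurable hW
    _ = (Measure.map W P).real (Ico (u - ε) u) := by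
        rw [← integral_map hW (aestronglyMeasurable_one.indicator hs), integral_indicator_one hs]
    _ ≤ M * volume.real (Ico (u - ε) u) :=
        measureReal_le_mul_volumeReal hM hdW (by simp)
    _ = M * ε := by simp [hε.le]

lemma abs_covP_ind_le {U V : Ω → ℝ}
    (hU : AEMeasurable U P) (hV : AEMeasurable V P) {M : ℝ} (hM : 0 ≤ M)
    (hdU : Measure.map U P ≤ ENNReal.ofReal M • volume)
    (hdV : Measure.map V P ≤ ENNReal.ofReal M • volume)
    (hqa : QuasiAssociatedPair P U V) (u v : ℝ) {ε : ℝ} (hε : 0 < ε) :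
    |covP P (fun ω => ind u (U ω)) (fun ω => ind v (V ω))| ≤
      ε⁻¹ * ε⁻¹ * |covP P U V| + 2 * M * ε := by
  have ind_meas (W : Ω → ℝ) (hW : AEMeasurable W P) (w : ℝ) :
      AEStronglyMeasurable (fun ω => ind w (W ω)) P :=
    ((measurable_ind w).comp_aemeasurable hW).aestronglyMeasurable
  have ramp_meas (W : Ω → ℝ) (hW : AEMeasurable W P) (w : ℝ) :
      AEStronglyMeasurable (fun ω => ramp w ε (W ω)) P :=
    ((lipschitzWith_ramp w hε).continuous.measurable.comp_aemeasurable hW).aestronglyMeasurable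
  have ind_Icc (W : Ω → ℝ) (w : ℝ) : ∀ᵐ ω ∂P, ind w (W ω) ∈ Icc (0 : ℝ) 1 :=
    Eventually.of_forall fun _ => ind_mem_Icc _ _
  have ramp_Icc (W : Ω → ℝ) (w : ℝ) : ∀ᵐ ω ∂P, ramp w ε (W ω) ∈ Icc (0 : ℝ) 1 :=
    Eventually.of_forall fun _ => ramp_mem_Icc _ _ _
  have ramps : |covP P (fun ω => ramp u ε (U ω)) (fun ω => ramp v ε (V ω))| ≤
      ε⁻¹ * ε⁻¹ * |covP P U V| := by
    simpa [Function.comp_def, Real.coe_toNNReal _ (inv_nonneg.2 hε.le)] using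
      hqa _ _ _ _ (lipschitzWith_ramp u hε) (lipschitzWith_ramp v hε)
  have close := abs_covP_sub_covP_le (ramp_meas U hU u) (ramp_Icc U u)
    (ind_meas U hU u) (ind_Icc U u) (ramp_meas V hV v) (ramp_Icc V v)
    (ind_meas V hV v) (ind_Icc V v)
  rw [abs_sub_comm] at close
  have := abs_sub_abs_le_abs_sub (covP P (fun ω => ind u (U ω)) (fun ω => ind v (V ω)))
    (covP P (fun ω => ramp u ε (U ω)) (fun ω => ramp v ε (V ω)))
  linarith [integral_abs_ramp_sub_ind_le hU hM hdU u hε,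
    integral_abs_ramp_sub_ind_le hV hM hdV v hε]

end

lemma le_three_mul_rpow_of_forall_le {x M C : ℝ} (hM : 0 < M) (hC : 0 ≤ C)
    (h : ∀ ε > 0, x ≤ ε⁻¹ * ε⁻¹ * C + 2 * M * ε) :
    x ≤ 3 * M ^ ((2 : ℝ) / 3) * C ^ ((1 : ℝ) / 3) := by
  rcases hC.eq_or_lt with rfl | hC
  · rw [Real.zero_rpow (by norm_num), mul_zero]
    by_contra! hx
    have : x ≤ x / 2 := by
      convert h (x / (4 * M)) (by positivity) using 1
      field_simp
      ring
    linarith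
  · set a := M ^ ((1 : ℝ) / 3)
    set b := C ^ ((1 : ℝ) / 3)
    have ha : 0 < a := Real.rpow_pos_of_pos hM _
    have hb : 0 < b := Real.rpow_pos_of_pos hC _
    have cube (y : ℝ) (hy : 0 ≤ y) : (y ^ ((1 : ℝ) / 3)) ^ 3 = y := by
      rw [← Real.rpow_natCast, ← Real.rpow_mul hy]; norm_num
    have hM23 : M ^ ((2 : ℝ) / 3) = a ^ 2 := by
      rw [← Real.rpow_natCast, ← Real.rpow_mul hM.le]; norm_num
    have hopt := h (b / a) (div_pos hb ha)
    rw [← cube M hM.le, ← cube C hC.le] at hopt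
    rw [hM23]
    convert hopt using 1
    field_simp
    ring

theorem statement_15 {Ω : Type*} [MeasurableSpace Ω]
    (P : Measure Ω) [IsProbabilityMeasure P] (U V : Ω → ℝ)
    (hU2 : MemLp U 2 P) (hV2 : MemLp V 2 P)
    (M : ℝ) (hM : 0 < M)
    (hdU : Measure.map U P ≤ ENNReal.ofReal M • (volume : Measure ℝ))
    (hdV : Measure.map V P ≤ ENNReal.ofReal M • (volume : Measure ℝ))
    (hqa : ∀ (f g : ℝ → ℝ) (Lf Lg : ℝ≥0), LipschitzWith Lf f → LipschitzWith Lg g →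
      |covP P (f ∘ U) (g ∘ V)| ≤ (Lf : ℝ) * (Lg : ℝ) * |covP P U V|) :
    ∀ u v : ℝ,
      |covP P (fun ω => if u ≤ U ω then (1 : ℝ) else 0)
          (fun ω => if v ≤ V ω then (1 : ℝ) else 0)| ≤
        3 * M ^ ((2 : ℝ) / 3) * |covP P U V| ^ ((1 : ℝ) / 3) := by
  intro u v
  refine le_three_mul_rpow_of_forall_le hM (abs_nonneg _) fun ε hε => ?_
  exact abs_covP_ind_le hU2.aestronglyMeasurable.aemeasurable
    hV2.aestronglyMeasurable.aemeasurable hM.le hdU hdV hqa u v hε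

end
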